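/- arXiv:cs/9812022 — 2 statements merged into one kernel-verified Lean document; each statement's English description precedes it below -/
import Mathlib

section
/- Let (T,χ,λ) be a normal-form hypertree decomposition of a conjunctive query Q and r a vertex of T. Then a set C equals treecomp(s) for some child s of r if and only if C is a [χ(r)]-component of Q with C ⊆ treecomp(r). -/
/-- A rooted tree on vertex type `P`, given by a parent function. -/
structure RTree (P : Type) where
  root : P
  parent : P → P
  parent_root : parent root = root
  reaches : ∀ p : P, ∃ n : ℕ, parent^[n] p = root

namespace RTree

variable {P : Type}

/-- `c` is a child of `p` in the rooted tree `T`. -/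
def child (T : RTree P) (c p : P) : Prop := c ≠ T.root ∧ T.parent c = p

/-- `p` belongs to the subtree `T_s` rooted at `s`. -/
def inSubtree (T : RTree P) (s p : P) : Prop := ∃ n : ℕ, T.parent^[n] p = s

/-- The undirected adjacency graph of the rooted tree. -/
def graph (T : RTree P) : SimpleGraph P where
  Adj p q := (p ≠ T.root ∧ T.parent p = q) ∨ (q ≠ T.root ∧ T.parent q = p)
  symm := by
    constructor
    intro p q h
    rcases h with h | h
    · exact Or.inr h
    · exact Or.inl h
  loopless := by
    constructor
    intro p h
    have hh : p ≠ T.root ∧ T.parent p = p := by rcases h with h | h <;> exact h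
    obtain ⟨n, hn⟩ := T.reaches p
    have hfix : ∀ m : ℕ, T.parent^[m] p = p := by
      intro m
      induction m with
      | zero => rfl
      | succ m ih => rw [Function.iterate_succ_apply, hh.2]; exact ih
    exact hh.1 (by rw [← hfix n]; exact hn)

end RTree

/-- A conjunctive query: a set of atoms `A`, each with its set of variables. -/
structure CQ (V A : Type) where
  var : A → Set V

namespace CQ

variable {V A : Type}

/-- The variables of the query. -/
def vars (Q : CQ V A) : Set V := ⋃ a : A, Q.var a

/-- The variables occurring in a set of atoms. -/
def varSet (Q : CQ V A) (S : Set A) : Set V := ⋃ a ∈ S, Q.var a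

/-- `x` and `y` are `[S]`-adjacent. -/
def adjOut (Q : CQ V A) (S : Set V) (x y : V) : Prop :=
  ∃ a : A, x ∈ Q.var a ∧ y ∈ Q.var a ∧ x ∉ S ∧ y ∉ S

/-- `W` is an `[S]`-connected set of variables. -/
def ConnSet (Q : CQ V A) (S W : Set V) : Prop :=
  W ⊆ Q.vars \ S ∧ ∀ x ∈ W, ∀ y ∈ W, Relation.ReflTransGen (Q.adjOut S) x y

/-- `C` is an `[S]`-component: a maximal nonempty `[S]`-connected set. -/
def IsComp (Q : CQ V A) (S C : Set V) : Prop :=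
  C.Nonempty ∧ Q.ConnSet S C ∧ ∀ C' : Set V, Q.ConnSet S C' → C ⊆ C' → C' = C

/-- `Q` is acyclic: it admits a join tree, i.e. a tree on its atoms in which
the occurrences of each variable induce a connected subtree. -/
def acyclic (Q : CQ V A) : Prop :=
  ∃ T : RTree A, ∀ v ∈ Q.vars, (T.graph.induce {a : A | v ∈ Q.var a}).Connected

end CQ

/-- A hypertree decomposition of `Q` on the rooted tree `T`. -/
structure HTD {V A P : Type} (Q : CQ V A) (T : RTree P) where
  χ : P → Set V
  lam : P → Set A
  cover : ∀ a : A, ∃ p : P, Q.var a ⊆ χ p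
  conn : ∀ v ∈ Q.vars, (T.graph.induce {p : P | v ∈ χ p}).Connected
  chiSub : ∀ p : P, χ p ⊆ Q.varSet (lam p)
  special : ∀ p : P, Q.varSet (lam p) ∩ (⋃ q ∈ {q : P | T.inSubtree p q}, χ q) ⊆ χ p

namespace HTD

variable {V A P : Type} {Q : CQ V A} {T : RTree P}

/-- `χ(T_s)`: the union of the `χ` labels over the subtree rooted at `s`. -/
def χSub (D : HTD Q T) (s : P) : Set V := ⋃ q ∈ {q : P | T.inSubtree s q}, D.χ q

/-- The decomposition has width at most `k`. -/
def widthLE (D : HTD Q T) (k : ℕ) : Prop :=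
  ∀ p : P, (D.lam p).Finite ∧ (D.lam p).ncard ≤ k

/-- The decomposition is complete. -/
def complete (D : HTD Q T) : Prop := ∀ a : A, ∃ p : P, Q.var a ⊆ D.χ p ∧ a ∈ D.lam p

/-- `vertices(W, HD)`: the vertices whose `χ` label meets `W`. -/
def verts (D : HTD Q T) (W : Set V) : Set P := {p : P | (D.χ p ∩ W).Nonempty}

/-- Normal form of a hypertree decomposition. -/
def NF (D : HTD Q T) : Prop := ∀ r s : P, T.child s r →
  (∃! C : Set V, Q.IsComp (D.χ r) C ∧ D.χSub s = C ∪ (D.χ s ∩ D.χ r)) ∧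
  (∀ C : Set V, Q.IsComp (D.χ r) C → D.χSub s = C ∪ (D.χ s ∩ D.χ r) →
     (D.χ s ∩ C).Nonempty) ∧
  (Q.varSet (D.lam s) ∩ D.χ r ⊆ D.χ s)

/-- `tc` is the `treecomp` function of a normal-form decomposition. -/
def IsTreeComp (D : HTD Q T) (tc : P → Set V) : Prop :=
  tc T.root = Q.vars ∧ ∀ s : P, s ≠ T.root →
    Q.IsComp (D.χ (T.parent s)) (tc s) ∧
    D.χSub s = tc s ∪ (D.χ s ∩ D.χ (T.parent s))

end HTD

/-- `Q` has hypertree width at most `k`. -/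
def CQ.hwLE {V A : Type} (Q : CQ V A) (k : ℕ) : Prop :=
  ∃ (P : Type) (T : RTree P) (D : HTD Q T), D.widthLE k

/-- The hypertree width of `Q`. -/
noncomputable def CQ.hw {V A : Type} (Q : CQ V A) : ℕ := sInf {k : ℕ | Q.hwLE k}

/-- A query decomposition of `Q` on the rooted tree `T`
(labels may contain both atoms and variables). -/
structure QDec {V A P : Type} (Q : CQ V A) (T : RTree P) where
  la : P → Set A
  lv : P → Set V
  coverA : ∀ a : A, ∃ p : P, a ∈ la p
  connA : ∀ a : A, (T.graph.induce {p : P | a ∈ la p}).Connected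
  connV : ∀ v ∈ Q.vars,
    (T.graph.induce {p : P | v ∈ lv p ∨ ∃ a ∈ la p, v ∈ Q.var a}).Connected

namespace QDec

variable {V A P : Type} {Q : CQ V A} {T : RTree P}

/-- A query decomposition is pure if labels contain atoms only. -/
def pure (D : QDec Q T) : Prop := ∀ p : P, D.lv p = ∅

/-- The query decomposition has width at most `k`. -/
def widthLE (D : QDec Q T) (k : ℕ) : Prop :=
  ∀ p : P, (D.la p).Finite ∧ (D.lv p).Finite ∧ (D.la p).ncard + (D.lv p).ncard ≤ k

end QDec

/-- `Q` has query width at most `k`. -/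
def CQ.qwLE {V A : Type} (Q : CQ V A) (k : ℕ) : Prop :=
  ∃ (P : Type) (T : RTree P) (D : QDec Q T), D.widthLE k

/-- The query width of `Q`. -/
noncomputable def CQ.qw {V A : Type} (Q : CQ V A) : ℕ := sInf {k : ℕ | Q.qwLE k}

/-!
Both sides are controlled by the identity `χ(T_r) \ χ(r) = treecomp(r) \ χ(r)`, valid at every
vertex (at the root because `χ(T_root) = var(Q)`). For a child `s`, `treecomp(s)` avoids `χ(r)` and
lies in `χ(T_s) ⊆ χ(T_r)`, hence in `treecomp(r)`. Conversely, a variable `v` of a component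
`C ⊆ treecomp(r)` occurs in `χ(p)` for some `p ≠ r` below `r`; if `s` is the child of `r` above `p`,
then `v ∈ χ(T_s) \ χ(r) ⊆ treecomp(s)`, and two `[χ(r)]`-components sharing `v` coincide.
-/

namespace CQ

variable {V A : Type} {Q : CQ V A} {S C C' : Set V}

theorem IsComp.eq_of_inter_nonempty (hC : Q.IsComp S C) (hC' : Q.IsComp S C')
    (hne : (C ∩ C').Nonempty) : C = C' := by
  obtain ⟨v, hvC, hvC'⟩ := hne
  have hconn : Q.ConnSet S (C ∪ C') := by
    refine ⟨Set.union_subset hC.2.1.1 hC'.2.1.1, fun x hx y hy => ?_⟩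
    have hxv : Relation.ReflTransGen (Q.adjOut S) x v := by
      rcases hx with hx | hx
      exacts [hC.2.1.2 x hx v hvC, hC'.2.1.2 x hx v hvC']
    have hvy : Relation.ReflTransGen (Q.adjOut S) v y := by
      rcases hy with hy | hy
      exacts [hC.2.1.2 v hvC y hy, hC'.2.1.2 v hvC' y hy]
    exact hxv.trans hvy
  exact (hC.2.2 _ hconn Set.subset_union_left).symm.trans
    (hC'.2.2 _ hconn Set.subset_union_right)

end CQ

namespace RTree

variable {P : Type} {T : RTree P} {s r p : P}

theorem inSubtree_of_child (h : T.child s r) (hp : T.inSubtree s p) : T.inSubtree r p := by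
  obtain ⟨n, hn⟩ := hp
  exact ⟨n + 1, by rw [Function.iterate_succ_apply', hn, h.2]⟩

theorem inSubtree_root (p : P) : T.inSubtree T.root p := T.reaches p

theorem exists_child_inSubtree (hp : T.inSubtree r p) (hpr : p ≠ r) :
    ∃ s, T.child s r ∧ T.inSubtree s p := by
  obtain ⟨n, hn⟩ := hp
  induction n generalizing r with
  | zero => exact absurd hn hpr
  | succ n ih =>
    rw [Function.iterate_succ_apply'] at hn
    by_cases hq : T.parent^[n] p = r
    · exact ih hpr hq
    · refine ⟨T.parent^[n] p, ⟨fun hroot => hq ?_, hn⟩, n, rfl⟩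
      rw [← hn, hroot, T.parent_root]

end RTree

namespace HTD

variable {V A P : Type} {Q : CQ V A} {T : RTree P} {D : HTD Q T} {tc : P → Set V} {s r : P}

theorem mem_χSub {v : V} : v ∈ D.χSub s ↔ ∃ q, T.inSubtree s q ∧ v ∈ D.χ q := by
  simp [χSub]

theorem χSub_subset_of_child (h : T.child s r) : D.χSub s ⊆ D.χSub r := fun _ hv =>
  let ⟨q, hq, hvq⟩ := mem_χSub.1 hv
  mem_χSub.2 ⟨q, RTree.inSubtree_of_child h hq, hvq⟩

theorem χSub_subset_vars (D : HTD Q T) (s : P) : D.χSub s ⊆ Q.vars := by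
  intro v hv
  obtain ⟨q, -, hvq⟩ := mem_χSub.1 hv
  obtain ⟨a, -, hva⟩ := Set.mem_iUnion₂.1 (D.chiSub q hvq)
  exact Set.mem_iUnion.2 ⟨a, hva⟩

theorem vars_subset_χSub_root (D : HTD Q T) : Q.vars ⊆ D.χSub T.root := by
  intro v hv
  obtain ⟨a, hva⟩ := Set.mem_iUnion.1 hv
  obtain ⟨p, hp⟩ := D.cover a
  exact mem_χSub.2 ⟨p, RTree.inSubtree_root p, hp hva⟩

namespace IsTreeComp

variable (htc : D.IsTreeComp tc)
include htc

theorem isComp_of_child (h : T.child s r) : Q.IsComp (D.χ r) (tc s) :=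
  h.2 ▸ (htc.2 s h.1).1

theorem χSub_diff_subset_of_child (h : T.child s r) : D.χSub s \ D.χ r ⊆ tc s := by
  intro v ⟨hv, hvr⟩
  rw [(htc.2 s h.1).2, h.2] at hv
  exact hv.resolve_right fun hv' => hvr hv'.2

theorem subset_χSub (r : P) : tc r ⊆ D.χSub r := by
  by_cases hr : r = T.root
  · subst hr
    exact htc.1 ▸ D.vars_subset_χSub_root
  · exact (htc.2 r hr).2 ▸ Set.subset_union_left

theorem χSub_diff_subset (r : P) : D.χSub r \ D.χ r ⊆ tc r := by
  by_cases hr : r = T.root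
  · subst hr
    exact htc.1 ▸ Set.sdiff_subset.trans (D.χSub_subset_vars _)
  · intro v ⟨hv, hvr⟩
    rw [(htc.2 r hr).2] at hv
    exact hv.resolve_right fun hv' => hvr hv'.1

end IsTreeComp

end HTD

theorem stmt_9_general {V A P : Type} (Q : CQ V A) (T : RTree P) (D : HTD Q T)
    (tc : P → Set V) (htc : D.IsTreeComp tc) (r : P) (C : Set V) :
    (∃ s : P, T.child s r ∧ C = tc s) ↔ (Q.IsComp (D.χ r) C ∧ C ⊆ tc r) := by
  constructor
  · rintro ⟨s, hs, rfl⟩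
    have hcomp := htc.isComp_of_child hs
    refine ⟨hcomp, fun v hv => htc.χSub_diff_subset r ⟨?_, (hcomp.2.1.1 hv).2⟩⟩
    exact HTD.χSub_subset_of_child hs (htc.subset_χSub s hv)
  · rintro ⟨hC, hCr⟩
    obtain ⟨v, hv⟩ := hC.1
    have hvr : v ∉ D.χ r := (hC.2.1.1 hv).2
    obtain ⟨p, hp, hvp⟩ := HTD.mem_χSub.1 (htc.subset_χSub r (hCr hv))
    obtain ⟨s, hs, hsp⟩ := RTree.exists_child_inSubtree hp fun h => hvr (h ▸ hvp)
    have hvs : v ∈ tc s := htc.χSub_diff_subset_of_child hs ⟨HTD.mem_χSub.2 ⟨p, hsp, hvp⟩, hvr⟩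
    exact ⟨s, hs, hC.eq_of_inter_nonempty (htc.isComp_of_child hs) ⟨v, hv, hvs⟩⟩

/-- In a normal-form hypertree decomposition, `C = treecomp(s)` for some child `s` of `r`
iff `C` is a `[χ(r)]`-component of `Q` with `C ⊆ treecomp(r)`. -/
theorem stmt_9 {V A P : Type} (Q : CQ V A) (T : RTree P) (D : HTD Q T)
    (hnf : D.NF) (tc : P → Set V) (htc : D.IsTreeComp tc) (r : P) (C : Set V) :
    (∃ s : P, T.child s r ∧ C = tc s) ↔ (Q.IsComp (D.χ r) C ∧ C ⊆ tc r) :=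
  stmt_9_general Q T D tc htc r C
end

section
/- For every conjunctive query Q, the hypertree width of Q is at most the query width of Q: hw(Q) ≤ qw(Q). -/
/-!
A query decomposition becomes a hypertree decomposition of no larger width on the same tree by
replacing each variable `u` in a label by one atom `a_u` containing `u`: an atom at the topmost
node `r_u` of the tree whose label has an atom mentioning `u`. Put into `χ(p)` the variables whose
region (the nodes whose label involves them) contains `p`, together with `var(a_u)` whenever `u` is
in the label of `p` and `r_u` lies below `p`. The region of `u` is connected, so it contains the
vertical path from `r_u` up to such a `p`, and by the choice of `r_u` every node of that path other
than `r_u` holds `u` itself; this keeps the enlarged `χ`-regions connected. The special condition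
holds because a connected set of nodes meeting both `T_p` and its complement contains `p`.
-/

lemma SimpleGraph.induce_connected_of_forall_reachable {P : Type} {G : SimpleGraph P}
    {R S : Set P} (hR : (G.induce R).Connected) (hRS : R ⊆ S)
    (h : ∀ x (hx : x ∈ S), ∃ y, ∃ hy : y ∈ R, (G.induce S).Reachable ⟨y, hRS hy⟩ ⟨x, hx⟩) :
    (G.induce S).Connected := by
  obtain ⟨r⟩ := hR.nonempty
  refine (connected_iff_exists_forall_reachable _).mpr ⟨⟨r, hRS r.2⟩, fun ⟨x, hx⟩ => ?_⟩
  obtain ⟨y, hy, hyx⟩ := h x hx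
  exact ((hR.preconnected r ⟨y, hy⟩).map (induceHomOfLE G hRS).toHom).trans hyx

namespace RTree

variable {P : Type} (T : RTree P)

lemma iterate_parent_root (n : ℕ) : T.parent^[n] T.root = T.root :=
  Function.iterate_fixed T.parent_root n

noncomputable def depth (p : P) : ℕ := sInf {n | T.parent^[n] p = T.root}

lemma iterate_parent_depth (p : P) : T.parent^[T.depth p] p = T.root :=
  Nat.sInf_mem (T.reaches p)

lemma depth_le {p : P} {n : ℕ} (h : T.parent^[n] p = T.root) : T.depth p ≤ n :=
  Nat.sInf_le h

lemma depth_lt_of_iterate_parent_ne {q : P} {n : ℕ} (hne : T.parent^[n] q ≠ q) :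
    T.depth (T.parent^[n] q) < T.depth q := by
  have hn : n ≠ 0 := by rintro rfl; exact hne rfl
  have hq := T.iterate_parent_depth q
  rcases le_or_gt n (T.depth q) with hle | hlt
  · have hroot : T.parent^[T.depth q - n] (T.parent^[n] q) = T.root := by
      rw [← Function.iterate_add_apply, Nat.sub_add_cancel hle, hq]
    have := T.depth_le hroot
    omega
  · have hroot : T.parent^[n] q = T.root := by
      rw [← Nat.sub_add_cancel hlt.le, Function.iterate_add_apply, hq, T.iterate_parent_root]
    have hq0 : T.depth q ≠ 0 := by
      intro h0
      rw [h0] at hq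
      exact hne (hroot.trans hq.symm)
    have := T.depth_le (p := T.root) (n := 0) rfl
    rw [hroot]
    omega

lemma exists_topmost {S : Set P} (hS : S.Nonempty) :
    ∃ r ∈ S, ∀ n, T.parent^[n] r ∈ S → T.parent^[n] r = r := by
  obtain ⟨r, hr, hmin⟩ := (measure T.depth).wf.has_min S hS
  exact ⟨r, hr, fun n hn => by_contra fun hne => hmin _ hn (T.depth_lt_of_iterate_parent_ne hne)⟩

lemma inSubtree_refl (p : P) : T.inSubtree p p := ⟨0, rfl⟩

lemma inSubtree_trans {p q r : P} (hpq : T.inSubtree p q) (hqr : T.inSubtree q r) :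
    T.inSubtree p r := by
  obtain ⟨n, rfl⟩ := hpq
  obtain ⟨m, rfl⟩ := hqr
  exact ⟨n + m, Function.iterate_add_apply _ _ _ _⟩

lemma inSubtree_antisymm {p q : P} (hpq : T.inSubtree p q) (hqp : T.inSubtree q p) : p = q := by
  obtain ⟨n, rfl⟩ := hpq
  obtain ⟨m, hm⟩ := hqp
  by_contra hne
  have h1 := T.depth_lt_of_iterate_parent_ne hne
  have h2 := T.depth_lt_of_iterate_parent_ne (n := m) (q := T.parent^[n] q) (by rwa [hm, ne_comm])
  rw [hm] at h2
  omega

lemma eq_of_adj_of_inSubtree {p x y : P} (hxy : T.graph.Adj x y) (hx : T.inSubtree p x)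
    (hy : ¬T.inSubtree p y) : x = p := by
  obtain ⟨n, hn⟩ := hx
  rcases hxy with ⟨-, rfl⟩ | ⟨-, rfl⟩
  · cases n with
    | zero => exact hn
    | succ m => exact absurd ⟨m, by rwa [← Function.iterate_succ_apply]⟩ hy
  · exact absurd ⟨n + 1, by rwa [Function.iterate_succ_apply]⟩ hy

lemma mem_of_reachable {S : Set P} {p : P} {x y : S} (h : (T.graph.induce S).Reachable x y)
    (hpx : T.inSubtree p x) (hpy : ¬T.inSubtree p y) : p ∈ S := by
  rw [SimpleGraph.reachable_iff_reflTransGen] at h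
  induction h with
  | refl => exact absurd hpx hpy
  | @tail b c _ hbc ih =>
    by_cases hb : T.inSubtree p b
    · exact T.eq_of_adj_of_inSubtree hbc hb hpy ▸ b.2
    · exact ih hb

lemma mem_of_connected {S : Set P} (hS : (T.graph.induce S).Connected) {p x y : P}
    (hx : x ∈ S) (hy : y ∈ S) (hpx : T.inSubtree p x) (hpy : ¬T.inSubtree p y) : p ∈ S :=
  T.mem_of_reachable (hS.preconnected ⟨x, hx⟩ ⟨y, hy⟩) hpx hpy

lemma iterate_parent_mem_of_connected {S : Set P} (hS : (T.graph.induce S).Connected) {q : P}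
    {n i : ℕ} (hq : q ∈ S) (hn : T.parent^[n] q ∈ S) (hi : i ≤ n) : T.parent^[i] q ∈ S := by
  by_cases h : T.inSubtree (T.parent^[i] q) (T.parent^[n] q)
  · have h' : T.inSubtree (T.parent^[n] q) (T.parent^[i] q) :=
      ⟨n - i, by rw [← Function.iterate_add_apply, Nat.sub_add_cancel hi]⟩
    exact T.inSubtree_antisymm h h' ▸ hn
  · exact T.mem_of_connected hS hq hn ⟨i, rfl⟩ h

lemma reachable_iterate_parent {S : Set P} {q : P} {n : ℕ} (h : ∀ i ≤ n, T.parent^[i] q ∈ S) :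
    (T.graph.induce S).Reachable ⟨q, h 0 n.zero_le⟩ ⟨T.parent^[n] q, h n le_rfl⟩ := by
  induction n with
  | zero => rfl
  | succ m ih =>
    refine (ih fun i hi => h i (by omega)).trans ?_
    by_cases hr : T.parent^[m] q = T.root
    · have heq : (⟨T.parent^[m + 1] q, h (m + 1) le_rfl⟩ : S) = ⟨T.parent^[m] q, h m (by omega)⟩ :=
        Subtype.ext <| show T.parent^[m + 1] q = T.parent^[m] q by
          rw [Function.iterate_succ_apply', hr, T.parent_root]
      rw [heq]
    · exact SimpleGraph.Adj.reachable (Or.inl ⟨hr, (Function.iterate_succ_apply' _ m q).symm⟩)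

end RTree

lemma CQ.mem_vars_of_mem_var {V A : Type} {Q : CQ V A} {a : A} {v : V} (h : v ∈ Q.var a) :
    v ∈ Q.vars :=
  Set.mem_iUnion.mpr ⟨a, h⟩

namespace QDec

variable {V A P : Type} {Q : CQ V A} {T : RTree P} (D : QDec Q T)

def region (v : V) : Set P := {p | v ∈ D.lv p ∨ ∃ a ∈ D.la p, v ∈ Q.var a}

def atomRegion (v : V) : Set P := {p | ∃ a ∈ D.la p, v ∈ Q.var a}

lemma atomRegion_subset_region (v : V) : D.atomRegion v ⊆ D.region v := fun _ => Or.inr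

lemma atomRegion_nonempty (u : Q.vars) : (D.atomRegion u).Nonempty := by
  obtain ⟨a, ha⟩ := Set.mem_iUnion.mp u.2
  obtain ⟨p, hp⟩ := D.coverA a
  exact ⟨p, a, hp, ha⟩

noncomputable def anchor (u : Q.vars) : P := (T.exists_topmost (D.atomRegion_nonempty u)).choose

lemma anchor_mem_atomRegion (u : Q.vars) : D.anchor u ∈ D.atomRegion u :=
  (T.exists_topmost (D.atomRegion_nonempty u)).choose_spec.1

lemma anchor_topmost (u : Q.vars) {n : ℕ} (h : T.parent^[n] (D.anchor u) ∈ D.atomRegion u) :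
    T.parent^[n] (D.anchor u) = D.anchor u :=
  (T.exists_topmost (D.atomRegion_nonempty u)).choose_spec.2 n h

noncomputable def anchorAtom (u : Q.vars) : A := (D.anchor_mem_atomRegion u).choose

lemma anchorAtom_mem (u : Q.vars) : D.anchorAtom u ∈ D.la (D.anchor u) :=
  (D.anchor_mem_atomRegion u).choose_spec.1

lemma mem_var_anchorAtom (u : Q.vars) : u.1 ∈ Q.var (D.anchorAtom u) :=
  (D.anchor_mem_atomRegion u).choose_spec.2

lemma anchor_mem_region {u : Q.vars} {w : V} (hw : w ∈ Q.var (D.anchorAtom u)) :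
    D.anchor u ∈ D.region w :=
  Or.inr ⟨_, D.anchorAtom_mem u, hw⟩

def chi (p : P) : Set V :=
  {w | (w ∈ Q.vars ∧ p ∈ D.region w) ∨
    ∃ u : Q.vars, u.1 ∈ D.lv p ∧ T.inSubtree p (D.anchor u) ∧ w ∈ Q.var (D.anchorAtom u)}

noncomputable def lam (p : P) : Set A := D.la p ∪ D.anchorAtom '' {u | u.1 ∈ D.lv p}

lemma exists_mem_region_of_mem_chi {p : P} {w : V} (hw : w ∈ D.chi p) :
    ∃ q, T.inSubtree p q ∧ q ∈ D.region w := by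
  rcases hw with ⟨-, hw⟩ | ⟨u, -, hu, hw⟩
  · exact ⟨p, T.inSubtree_refl p, hw⟩
  · exact ⟨D.anchor u, hu, D.anchor_mem_region hw⟩

lemma chi_connected (v : V) (hv : v ∈ Q.vars) : (T.graph.induce {p | v ∈ D.chi p}).Connected := by
  have hsub : D.region v ⊆ {p | v ∈ D.chi p} := fun p hp => Or.inl ⟨hv, hp⟩
  refine SimpleGraph.induce_connected_of_forall_reachable (D.connV v hv) hsub ?_
  rintro p (⟨-, hp⟩ | ⟨u, hup, ⟨n, rfl⟩, hvu⟩)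
  · exact ⟨p, hp, .rfl⟩
  -- the path from the anchor of `u` up to `p` stays in the region of `u`, and by topmost-ness
  -- its only node with an atom mentioning `u` is the anchor itself
  have hpath : ∀ i ≤ n, T.parent^[i] (D.anchor u) ∈ {p | v ∈ D.chi p} := by
    intro i hi
    have hreg := T.iterate_parent_mem_of_connected (D.connV u u.2)
      (D.atomRegion_subset_region u (D.anchor_mem_atomRegion u)) (Or.inl hup) hi
    rcases hreg with hlv | hatom
    · exact Or.inr ⟨u, hlv, ⟨i, rfl⟩, hvu⟩
    · rw [D.anchor_topmost u hatom]
      exact hsub (D.anchor_mem_region hvu)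
  exact ⟨D.anchor u, D.anchor_mem_region hvu, T.reachable_iterate_parent hpath⟩

lemma chi_subset (p : P) : D.chi p ⊆ Q.varSet (D.lam p) := by
  simp only [CQ.varSet, Set.subset_def, Set.mem_iUnion, exists_prop]
  rintro w (⟨hw, hlv | ⟨a, ha, hwa⟩⟩ | ⟨u, hu, -, hwu⟩)
  · exact ⟨_, Or.inr ⟨⟨w, hw⟩, hlv, rfl⟩, D.mem_var_anchorAtom ⟨w, hw⟩⟩
  · exact ⟨a, Or.inl ha, hwa⟩
  · exact ⟨_, Or.inr ⟨u, hu, rfl⟩, hwu⟩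

lemma chi_special (p : P) :
    Q.varSet (D.lam p) ∩ (⋃ q ∈ {q | T.inSubtree p q}, D.chi q) ⊆ D.chi p := by
  rintro w ⟨hw, hwsub⟩
  simp only [CQ.varSet, Set.mem_iUnion, exists_prop] at hw hwsub
  obtain ⟨a, ha | ⟨u, hu, rfl⟩, hwa⟩ := hw
  · exact Or.inl ⟨CQ.mem_vars_of_mem_var hwa, Or.inr ⟨a, ha, hwa⟩⟩
  by_cases hanc : T.inSubtree p (D.anchor u)
  · exact Or.inr ⟨u, hu, hanc, hwa⟩
  obtain ⟨q, hpq, hwq⟩ := hwsub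
  obtain ⟨q', hqq', hq'⟩ := D.exists_mem_region_of_mem_chi hwq
  have hwv := CQ.mem_vars_of_mem_var hwa
  exact Or.inl ⟨hwv, T.mem_of_connected (D.connV w hwv) hq' (D.anchor_mem_region hwa)
    (T.inSubtree_trans hpq hqq') hanc⟩

noncomputable def toHTD : HTD Q T where
  χ := D.chi
  lam := D.lam
  cover a := by
    obtain ⟨p, hp⟩ := D.coverA a
    exact ⟨p, fun w hw => Or.inl ⟨CQ.mem_vars_of_mem_var hw, Or.inr ⟨a, hp, hw⟩⟩⟩
  conn := D.chi_connected
  chiSub := D.chi_subset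
  special := D.chi_special

lemma toHTD_widthLE {k : ℕ} (hD : D.widthLE k) : D.toHTD.widthLE k := by
  intro p
  obtain ⟨hla, hlv, hk⟩ := hD p
  have hvars : {u : Q.vars | u.1 ∈ D.lv p}.ncard ≤ (D.lv p).ncard :=
    Set.ncard_le_ncard_of_injOn Subtype.val (fun _ => id) Subtype.val_injective.injOn hlv
  have hfin : {u : Q.vars | u.1 ∈ D.lv p}.Finite := hlv.preimage Subtype.val_injective.injOn
  refine ⟨hla.union (hfin.image _), ?_⟩
  calc (D.lam p).ncard
      ≤ (D.la p).ncard + (D.anchorAtom '' {u | u.1 ∈ D.lv p}).ncard := Set.ncard_union_le _ _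
    _ ≤ (D.la p).ncard + (D.lv p).ncard := by
      gcongr
      exact (Set.ncard_image_le hfin).trans hvars
    _ ≤ k := hk

end QDec

lemma CQ.hwLE_of_qwLE {V A : Type} (Q : CQ V A) {k : ℕ} (h : Q.qwLE k) : Q.hwLE k := by
  obtain ⟨P, T, D, hD⟩ := h
  exact ⟨P, T, D.toHTD, D.toHTD_widthLE hD⟩

lemma CQ.qwLE_natCard {V A : Type} [Finite A] (Q : CQ V A) : Q.qwLE (Nat.card A) := by
  let T : RTree Unit := ⟨(), id, rfl, fun _ => ⟨0, rfl⟩⟩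
  have hconn {S : Set Unit} (hS : () ∈ S) : (T.graph.induce S).Connected :=
    (SimpleGraph.connected_iff_exists_forall_reachable _).mpr
      ⟨⟨(), hS⟩, fun x => Subsingleton.elim _ x ▸ .rfl⟩
  refine ⟨Unit, T, ⟨fun _ => Set.univ, fun _ => ∅, fun _ => ⟨(), trivial⟩,
    fun _ => hconn trivial, fun v hv => hconn ?_⟩, fun _ => ?_⟩
  · obtain ⟨a, ha⟩ := Set.mem_iUnion.mp hv
    exact Or.inr ⟨a, trivial, ha⟩
  · simp [Set.ncard_univ, Set.toFinite]

theorem stmt_12_general {V A : Type} [Finite A] (Q : CQ V A) : Q.hw ≤ Q.qw := by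
  have hqw : Q.qwLE Q.qw := Nat.sInf_mem (s := {k | Q.qwLE k}) ⟨_, Q.qwLE_natCard⟩
  exact Nat.sInf_le (Q.hwLE_of_qwLE hqw)

/-- For every conjunctive query `Q`, `hw(Q) ≤ qw(Q)`. -/
theorem stmt_12 {V A : Type} [Finite V] [Finite A] (Q : CQ V A) : Q.hw ≤ Q.qw :=
  stmt_12_general Q
end
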